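/- arXiv:2006.01393 — 2 statements merged into one kernel-verified Lean document; each statement's English description precedes it below -/
import Mathlib

section
/- Let α = α_s + α_t with α_s, α_t ∈ (0,1). Suppose that for every subset B ⊆ {1,…,L} with B* ⊆ B: (i) the pretest passes with probability at least 1 − α_s, i.e. P(Ω ∖ S_B) ≤ α_s, and (ii) P({ω : β* ∈ C_B(ω)}) ≥ 1 − α_t. Then the pretested union confidence region has coverage at least 1 − α: P({ω : there exists B ⊆ {1,…,L} with |B| = s̄ − 1, ω ∈ S_B, and β* ∈ C_B(ω)}) ≥ 1 − α. -/
open MeasureTheory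

section ProbabilityBounds

variable {Ω : Type*} [MeasurableSpace Ω] {P : Measure Ω} [IsProbabilityMeasure P]
  {s t : Set Ω} {a b : ℝ}

theorem ofReal_one_sub_le_prob_iff (hs : MeasurableSet s) (ha : 0 ≤ a) :
    ENNReal.ofReal (1 - a) ≤ P s ↔ P sᶜ ≤ ENNReal.ofReal a := by
  rw [ENNReal.ofReal_sub _ ha, ENNReal.ofReal_one, prob_compl_eq_one_sub hs,
    tsub_le_iff_right, tsub_le_iff_right, add_comm]

theorem ofReal_one_sub_add_le_prob_inter (hs : MeasurableSet s) (ht : MeasurableSet t)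
    (ha : 0 ≤ a) (hb : 0 ≤ b) (hsa : P sᶜ ≤ ENNReal.ofReal a) (htb : P tᶜ ≤ ENNReal.ofReal b) :
    ENNReal.ofReal (1 - (a + b)) ≤ P (s ∩ t) := by
  rw [ofReal_one_sub_le_prob_iff (hs.inter ht) (add_nonneg ha hb), Set.compl_inter,
    ENNReal.ofReal_add ha hb]
  exact (measure_union_le _ _).trans (add_le_add hsa htb)

end ProbabilityBounds

theorem pretested_union_ci_coverage_general
    {Ω : Type*} [MeasurableSpace Ω] (P : Measure Ω) [IsProbabilityMeasure P]
    (L : ℕ) (βstar : ℝ)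
    (α αs αt : ℝ)
    (hαs0 : 0 < αs) (hαt0 : 0 < αt)
    (hsum : α = αs + αt)
    (sbar : ℕ) (hsL : sbar ≤ L)
    (Bstar : Finset (Fin L)) (hBstar : Bstar.card < sbar)
    (C : Finset (Fin L) → Ω → Set ℝ)
    (hmeas : ∀ B : Finset (Fin L), MeasurableSet {ω | βstar ∈ C B ω})
    (S : Finset (Fin L) → Set Ω)
    (hSmeas : ∀ B : Finset (Fin L), MeasurableSet (S B))
    (hpre : ∀ B : Finset (Fin L), Bstar ⊆ B → P (S B)ᶜ ≤ ENNReal.ofReal αs)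
    (hcov : ∀ B : Finset (Fin L), Bstar ⊆ B →
      ENNReal.ofReal (1 - αt) ≤ P {ω | βstar ∈ C B ω}) :
    ENNReal.ofReal (1 - α) ≤
      P {ω | ∃ B : Finset (Fin L), B.card = sbar - 1 ∧ ω ∈ S B ∧ βstar ∈ C B ω} := by
  obtain ⟨B₀, hB₀, hB₀card⟩ : ∃ B₀, Bstar ⊆ B₀ ∧ B₀.card = sbar - 1 :=
    Finset.exists_superset_card_eq (Nat.le_sub_one_of_lt hBstar)
      (by rw [Fintype.card_fin]; omega)
  have hmiss : P {ω | βstar ∈ C B₀ ω}ᶜ ≤ ENNReal.ofReal αt :=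
    (ofReal_one_sub_le_prob_iff (hmeas B₀) hαt0.le).1 (hcov B₀ hB₀)
  refine le_trans ?_ (measure_mono fun ω (hω : ω ∈ S B₀ ∩ {ω | βstar ∈ C B₀ ω}) =>
    ⟨B₀, hB₀card, hω⟩)
  exact hsum ▸ ofReal_one_sub_add_le_prob_inter (hSmeas B₀) (hmeas B₀) hαs0.le hαt0.le
    (hpre B₀ hB₀) hmiss

/-- The pretested union confidence interval has coverage at least
`1 - α` where `α = αs + αt`. -/
theorem pretested_union_ci_coverage
    {Ω : Type*} [MeasurableSpace Ω] (P : Measure Ω) [IsProbabilityMeasure P]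
    (L : ℕ) (hL : 1 ≤ L) (βstar : ℝ)
    (α αs αt : ℝ) (hα0 : 0 < α) (hα1 : α < 1)
    (hαs0 : 0 < αs) (hαs1 : αs < 1) (hαt0 : 0 < αt) (hαt1 : αt < 1)
    (hsum : α = αs + αt)
    (sbar : ℕ) (hs1 : 1 ≤ sbar) (hsL : sbar ≤ L)
    (Bstar : Finset (Fin L)) (hBstar : Bstar.card < sbar)
    (C : Finset (Fin L) → Ω → Set ℝ)
    (hmeas : ∀ B : Finset (Fin L), MeasurableSet {ω | βstar ∈ C B ω})
    (S : Finset (Fin L) → Set Ω)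
    (hSmeas : ∀ B : Finset (Fin L), MeasurableSet (S B))
    (hpre : ∀ B : Finset (Fin L), Bstar ⊆ B → P (S B)ᶜ ≤ ENNReal.ofReal αs)
    (hcov : ∀ B : Finset (Fin L), Bstar ⊆ B →
      ENNReal.ofReal (1 - αt) ≤ P {ω | βstar ∈ C B ω}) :
    ENNReal.ofReal (1 - α) ≤
      P {ω | ∃ B : Finset (Fin L), B.card = sbar - 1 ∧ ω ∈ S B ∧ βstar ∈ C B ω} :=
  pretested_union_ci_coverage_general P L βstar α αs αt hαs0 hαt0 hsum sbar hsL Bstar hBstar C hmeas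
    S hSmeas hpre hcov
end

section
/- For any two nonempty subsets V, V' ⊆ {1,…,L} with |V| = |V'|, the random variables M_V = min_{j ∈ V} Σ_{k=1}^L W_{jk} and M_{V'} = min_{j ∈ V'} Σ_{k=1}^L W_{jk} have the same distribution (the laws P ∘ M_V⁻¹ and P ∘ M_{V'}⁻¹ on ℝ coincide). In other words, the distribution of the minimum row-sum statistic over a set of valid instruments depends only on the number of valid instruments, not on which instruments are valid. -/
/-!
Relabelling the indices by a permutation `σ` of `{1, …, L}` permutes the i.i.d. family `(U_e)`
through `Sym2.map σ`, so it leaves its joint law `ν^⊗` unchanged. Under this relabelling the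
sum of row `j` becomes the sum of row `σ j` (the sum over `k` is only reindexed), so `M_{σ V'}`
has the law of `M_{V'}`; and every `V` with `|V| = |V'|` is `σ V'` for some `σ`.
-/

open MeasureTheory ProbabilityTheory

namespace ProbabilityTheory

variable {Ω ι : Type*} [MeasurableSpace Ω] {P : Measure Ω} [Fintype ι]
  {U : ι → Ω → ℝ} {ν : Measure ℝ}

theorem iIndepFun.map_fun_eq_pi (hmeas : ∀ i, AEMeasurable (U i) P) (hindep : iIndepFun U P)
    (hdist : ∀ i, P.map (U i) = ν) :
    P.map (fun ω i => U i ω) = Measure.pi fun _ => ν := by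
  simp only [hindep.map_fun_eq_pi_map hmeas, hdist]

theorem iIndepFun.map_fun_precomp_eq (hmeas : ∀ i, AEMeasurable (U i) P)
    (hindep : iIndepFun U P) (hdist : ∀ i, P.map (U i) = ν) {g : ι → ι} (hg : g.Injective) :
    P.map (fun ω i => U (g i) ω) = P.map (fun ω i => U i ω) := by
  rw [hindep.map_fun_eq_pi hmeas hdist,
    (hindep.precomp hg).map_fun_eq_pi (fun i => hmeas (g i)) (fun i => hdist (g i))]

end ProbabilityTheory

section MinRowSum

variable {α : Type*} [Fintype α]

def minRowSum (s : Finset α) (hs : s.Nonempty) (u : Sym2 α → ℝ) : ℝ :=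
  s.inf' hs fun j => ∑ k, u s(j, k)

theorem measurable_minRowSum (s : Finset α) (hs : s.Nonempty) :
    Measurable (minRowSum s hs) := by
  unfold minRowSum
  fun_prop

theorem minRowSum_comp_sym2Map (σ : Equiv.Perm α) (s : Finset α) (hs : s.Nonempty)
    (u : Sym2 α → ℝ) :
    minRowSum s hs (u ∘ Sym2.map σ) = minRowSum (s.map σ.toEmbedding) hs.map u := by
  unfold minRowSum
  rw [Finset.inf'_map]
  refine Finset.inf'_congr hs rfl fun j _ => ?_
  exact Equiv.sum_comp σ fun k => u s(σ j, k)

end MinRowSum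

theorem min_row_sum_distribution_invariant_general
    {Ω : Type*} [MeasurableSpace Ω] (P : Measure Ω)
    (L : ℕ) (ν : Measure ℝ)
    (U : Sym2 (Fin L) → Ω → ℝ)
    (hmeas : ∀ e, Measurable (U e))
    (hindep : iIndepFun U P)
    (hdist : ∀ e, P.map (U e) = ν)
    (W : Fin L → Fin L → Ω → ℝ) (hW : ∀ j k, W j k = U s(j, k))
    (V V' : Finset (Fin L)) (hV : V.Nonempty) (hV' : V'.Nonempty)
    (hcard : V.card = V'.card) :
    P.map (fun ω => V.inf' hV fun j => ∑ k, W j k ω) =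
      P.map (fun ω => V'.inf' hV' fun j => ∑ k, W j k ω) := by
  obtain ⟨σ, rfl⟩ := Equiv.Perm.exists_map_finset_eq V' V hcard.symm
  have hjoint : Measurable fun ω e => U e ω := measurable_pi_lambda _ hmeas
  have hstat : ∀ (S : Finset (Fin L)) (hS : S.Nonempty),
      (fun ω => S.inf' hS fun j => ∑ k, W j k ω) = minRowSum S hS ∘ fun ω e => U e ω := by
    intro S hS
    funext ω
    simp [minRowSum, hW]
  have hrelabel : minRowSum (V'.map σ.toEmbedding) hV ∘ (fun ω e => U e ω)
      = minRowSum V' hV' ∘ fun ω e => U (Sym2.map σ e) ω := by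
    funext ω
    exact (minRowSum_comp_sym2Map σ V' hV' fun e => U e ω).symm
  rw [hstat, hstat, hrelabel,
    ← Measure.map_map (measurable_minRowSum V' hV') (measurable_pi_lambda _ fun e => hmeas _),
    ← Measure.map_map (measurable_minRowSum V' hV') hjoint,
    hindep.map_fun_precomp_eq (fun e => (hmeas e).aemeasurable) hdist
      (Sym2.map.injective σ.injective)]

/-- The distribution of the minimum row-sum statistic of an i.i.d. symmetric
random array over a set of valid instruments depends only on the number of
valid instruments, not on which instruments are valid. -/
theorem min_row_sum_distribution_invariant
    {Ω : Type*} [MeasurableSpace Ω] (P : Measure Ω) [IsProbabilityMeasure P]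
    (L : ℕ) (hL : 1 ≤ L) (ν : Measure ℝ) [IsProbabilityMeasure ν]
    (U : Sym2 (Fin L) → Ω → ℝ)
    (hmeas : ∀ e, Measurable (U e))
    (hindep : iIndepFun U P)
    (hdist : ∀ e, P.map (U e) = ν)
    (W : Fin L → Fin L → Ω → ℝ) (hW : ∀ j k, W j k = U s(j, k))
    (V V' : Finset (Fin L)) (hV : V.Nonempty) (hV' : V'.Nonempty)
    (hcard : V.card = V'.card) :
    P.map (fun ω => V.inf' hV fun j => ∑ k, W j k ω) =
      P.map (fun ω => V'.inf' hV' fun j => ∑ k, W j k ω) :=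
  min_row_sum_distribution_invariant_general P L ν U hmeas hindep hdist W hW V V' hV hV' hcard
end
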